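/- Let (ν_t)_{t≥0} be a weakly continuous map into M_1(𝒰) satisfying the mild-form mean-field equation for every φ ∈ C_b(𝒰), and suppose that for every s ≥ 0 and 1 ≤ n ≤ C the restriction of ν_s to 𝒰_n is absolutely continuous with respect to Lebesgue measure on [0,∞)^n. Then the mild-form equation also holds when the test function φ is the indicator function of a closed rectangle {(n,l_1,…,l_n) ∈ 𝒰_n : 0 ≤ l_i ≤ y_i for all i}, for any 1 ≤ n ≤ C and any y ∈ [0,∞)^n, as well as when φ is the indicator of {0}. -/

import Mathlib

open MeasureTheory Filter Set
open scoped NNReal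

noncomputable section

/-- The server-state space `𝒰`: an occupancy `n : ℕ` together with the ages (in `[0,∞)`)
of the `n` jobs in service.  (Statements restrict attention to measures supported on
occupancies `n ≤ C`.) -/
abbrev SState : Type := Σ n : ℕ, (Fin n → ℝ≥0)

namespace MFModel

/-- The set `𝒰_n` of states with occupancy exactly `n`. -/
def level (n : ℕ) : Set SState := {u | u.1 = n}

/-- The empty state `0 ∈ 𝒰_0`. -/
def emptyState : SState := ⟨0, fun i => i.elim0⟩

/-- The state `(1,0)`: a single job of age `0`. -/
def oneZero : SState := ⟨1, fun _ => 0⟩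

/-- `ν` is a probability measure concentrated on `𝒰 = ⋃_{n ≤ C} 𝒰_n`. -/
def MemM1 (C : ℕ) (ν : Measure SState) : Prop :=
  IsProbabilityMeasure ν ∧ ν {u : SState | u.1 ≤ C} = 1

/-- `R̄_n(ν) = Σ_{m=n}^C ν(𝒰_m)` (so that `R̄_{C+1}(ν) = 0`). -/
def Rbar (C : ℕ) (ν : Measure SState) (n : ℕ) : ℝ :=
  ∑ m ∈ Finset.Icc n C, (ν (level m)).toReal

/-- `Φ_n(ν) = Σ_{k=0}^{d-1} R̄_n(ν)^k R̄_{n+1}(ν)^{d-1-k}`, the divided power difference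
`(R̄_n^d − R̄_{n+1}^d)/(R̄_n − R̄_{n+1})`. -/
def Phi (C d : ℕ) (ν : Measure SState) (n : ℕ) : ℝ :=
  ∑ k ∈ Finset.range d, (Rbar C ν n) ^ k * (Rbar C ν (n + 1)) ^ (d - 1 - k)

/-- The restriction of `ν` to the level `𝒰_n`, viewed as a measure on the ages. -/
def fiber (ν : Measure SState) (n : ℕ) : Measure (Fin n → ℝ≥0) :=
  Measure.comap (fun x : Fin n → ℝ≥0 => (⟨n, x⟩ : SState)) ν

/-- The restriction of `ν` to the level `𝒰_n`, as a measure on `[0,∞)^n ⊆ ℝ^n`. -/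
def fiberReal (ν : Measure SState) (n : ℕ) : Measure (Fin n → ℝ) :=
  Measure.map (fun (x : Fin n → ℝ≥0) (i : Fin n) => (x i : ℝ)) (fiber ν n)

/-- The pairing `⟨ν, φ⟩ = ∫_𝒰 φ dν`. -/
def pair (ν : Measure SState) (φ : SState → ℝ) : ℝ := ∫ u, φ u ∂ν

/-- The age shift `τ_y^+` on states (`y` a real number, truncated at `0`). -/
def shift (y : ℝ) (u : SState) : SState := ⟨u.1, fun i => u.2 i + Real.toNNReal y⟩

/-- `φ ∈ C_b(𝒰)`: bounded continuous. -/
def IsCb (φ : SState → ℝ) : Prop := Continuous φ ∧ ∃ M, ∀ u, |φ u| ≤ M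

/-- `φ ∈ C_b^1(𝒰)` with partial-derivative family `D`: `φ` is bounded continuous, and on
each level the partial derivatives (one-sided at the boundary of `[0,∞)`) exist, are
continuous and are bounded; `D n i x` is `∂φ(n,x)/∂x_i`. -/
def IsCb1 (φ : SState → ℝ) (D : (n : ℕ) → Fin n → (Fin n → ℝ≥0) → ℝ) : Prop :=
  IsCb φ ∧
  (∀ n (i : Fin n), Continuous (D n i)) ∧
  (∃ M, ∀ n (i : Fin n) x, |D n i x| ≤ M) ∧
  (∀ n (i : Fin n) (x : Fin n → ℝ≥0),
    HasDerivWithinAt (fun y : ℝ => φ ⟨n, Function.update x i (Real.toNNReal y)⟩)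
      (D n i x) (Set.Ici (0 : ℝ)) ((x i : ℝ)))

/-- `φ' = Σ_i ∂φ/∂x_i`, built from the partial-derivative family `D`. -/
def sumDeriv (D : (n : ℕ) → Fin n → (Fin n → ℝ≥0) → ℝ) (u : SState) : ℝ :=
  ∑ i : Fin u.1, D u.1 i u.2

/-- The drift functional `B[φ](ν)` of the mean-field model. -/
def drift (C d : ℕ) (lam : ℝ) (β : ℝ≥0 → ℝ) (φ : SState → ℝ) (ν : Measure SState) : ℝ :=
  (∑ n ∈ Finset.range C, ∑ j : Fin (n + 1),
    ∫ x : Fin (n + 1) → ℝ≥0,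
      β (x j) * (φ ⟨n, x ∘ j.succAbove⟩ - φ ⟨n + 1, x⟩) ∂(fiber ν (n + 1)))
  + lam * ((ν (level 0)).toReal * Phi C d ν 0 * (φ oneZero - φ emptyState)
      + ∑ n ∈ Finset.Icc 1 (C - 1), (Phi C d ν n / (n + 1)) *
          ∑ j : Fin (n + 1),
            ∫ x : Fin n → ℝ≥0, (φ ⟨n + 1, j.insertNth 0 x⟩ - φ ⟨n, x⟩) ∂(fiber ν n))

/-- Weak continuity of a path of measures on `[0,∞)`. -/
def WeaklyContinuous (ν : ℝ → Measure SState) : Prop :=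
  ∀ f : BoundedContinuousFunction SState ℝ,
    ContinuousOn (fun t => ∫ u, f u ∂(ν t)) (Set.Ici (0 : ℝ))

/-- The weak-form mean-field equation for the test function `φ` with derivative family `D`. -/
def WeakEq (C d : ℕ) (lam : ℝ) (β : ℝ≥0 → ℝ) (ν : ℝ → Measure SState)
    (φ : SState → ℝ) (D : (n : ℕ) → Fin n → (Fin n → ℝ≥0) → ℝ) : Prop :=
  ∀ t ≥ (0 : ℝ),
    pair (ν t) φ = pair (ν 0) φ + (∫ s in (0 : ℝ)..t, pair (ν s) (sumDeriv D))
      + ∫ s in (0 : ℝ)..t, drift C d lam β φ (ν s)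

/-- The mild-form mean-field equation for the test function `φ`. -/
def MildEq (C d : ℕ) (lam : ℝ) (β : ℝ≥0 → ℝ) (ν : ℝ → Measure SState)
    (φ : SState → ℝ) : Prop :=
  ∀ t ≥ (0 : ℝ),
    pair (ν t) φ = pair (ν 0) (fun u => φ (shift t u))
      + ∫ s in (0 : ℝ)..t, drift C d lam β (fun u => φ (shift (t - s) u)) (ν s)

/-- A mean-field model solution: a weakly continuous path of probability measures on `𝒰`
solving the weak-form equation for every `C_b^1` test function. -/
def IsMFSolution (C d : ℕ) (lam : ℝ) (β : ℝ≥0 → ℝ) (ν : ℝ → Measure SState) : Prop :=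
  (∀ t ≥ (0 : ℝ), MemM1 C (ν t)) ∧ WeaklyContinuous ν ∧
  ∀ (φ : SState → ℝ) (D : (n : ℕ) → Fin n → (Fin n → ℝ≥0) → ℝ),
    IsCb1 φ D → WeakEq C d lam β ν φ D

/-- A mild solution: weakly continuous path of probability measures on `𝒰` solving
the mild-form equation for every `C_b` test function. -/
def IsMildSolution (C d : ℕ) (lam : ℝ) (β : ℝ≥0 → ℝ) (ν : ℝ → Measure SState) : Prop :=
  (∀ t ≥ (0 : ℝ), MemM1 C (ν t)) ∧ WeaklyContinuous ν ∧
  ∀ φ : SState → ℝ, IsCb φ → MildEq C d lam β ν φ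

/-- The total-variation style norm `‖ν¹ − ν²‖ = sup_{‖φ‖_∞ ≤ 1, φ ∈ C_b} |⟨ν¹,φ⟩ − ⟨ν²,φ⟩|`. -/
def measDist (μ₁ μ₂ : Measure SState) : ℝ :=
  ⨆ φ : {φ : BoundedContinuousFunction SState ℝ // ‖φ‖ ≤ 1},
    |(∫ u, φ.1 u ∂μ₁) - ∫ u, φ.1 u ∂μ₂|

end MFModel
end

/-!
The indicator of `𝒰_0` is bounded continuous because every level `𝒰_n` is clopen, so only the
rectangles need work. The indicator of the closed box `{x ≤ y}` in `𝒰_n` is the pointwise limit,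
everywhere, of the thickened indicators `boxApprox n y k`, which are continuous, bounded by `1`
and Lipschitz along the age shift. Each term of the mild equation passes to this limit by
dominated convergence: the pairings directly, the drift because it is a finite combination of
integrals `∫ w (φ ∘ p - φ ∘ q)` against the level restrictions of `ν_s`, and the time integral
because these are bounded uniformly in `s`. The Lipschitz property, together with weak continuity
of `s ↦ ν_s`, makes the approximate drift continuous in `s`, so that its time integral is a genuine
integral rather than Lean's junk value `0`.
-/

open Function Topology

section SigmaType

variable {ι : Type*} {X : ι → Type*}

theorem measurableSet_sigma_iff [∀ i, MeasurableSpace (X i)] {s : Set (Σ i, X i)} :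
    MeasurableSet s ↔ ∀ i, MeasurableSet (Sigma.mk i ⁻¹' s) := by
  change MeasurableSet[⨅ i, MeasurableSpace.map (Sigma.mk i) _] s ↔ _
  rw [MeasurableSpace.measurableSet_iInf]
  rfl

theorem measurableEmbedding_sigmaMk [∀ i, MeasurableSpace (X i)] (i : ι) :
    MeasurableEmbedding (Sigma.mk (β := X) i) where
  injective := sigma_mk_injective
  measurable := Measurable.of_le_map (iInf_le _ i)
  measurableSet_image' {s} hs := by
    refine measurableSet_sigma_iff.2 fun j => ?_
    rcases eq_or_ne j i with rfl | hji
    · rwa [preimage_image_eq _ sigma_mk_injective]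
    · convert MeasurableSet.empty
      exact eq_empty_of_forall_notMem fun _ ⟨_, _, hx⟩ => hji (congrArg Sigma.fst hx).symm

instance Sigma.opensMeasurableSpace [∀ i, TopologicalSpace (X i)] [∀ i, MeasurableSpace (X i)]
    [∀ i, OpensMeasurableSpace (X i)] : OpensMeasurableSpace (Σ i, X i) where
  borel_le := MeasurableSpace.generateFrom_le fun _ hs =>
    measurableSet_sigma_iff.2 fun _ => (hs.preimage continuous_sigmaMk).measurableSet

theorem extend_sigmaMk_of_ne {Y : Type*} [Zero Y] {i j : ι} (h : j ≠ i) (F : X i → Y)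
    (x : X j) : extend (Sigma.mk i) F 0 ⟨j, x⟩ = 0 :=
  extend_apply' _ _ _ fun ⟨_, hx⟩ => h (congrArg Sigma.fst hx).symm

theorem Continuous.extend_sigmaMk [∀ i, TopologicalSpace (X i)] {Y : Type*} [TopologicalSpace Y]
    [Zero Y] {i : ι} {F : X i → Y} (hF : Continuous F) :
    Continuous (extend (Sigma.mk i) F 0) := by
  refine continuous_sigma fun j => ?_
  rcases eq_or_ne j i with rfl | hji
  · simpa only [sigma_mk_injective.extend_apply] using hF
  · simpa only [extend_sigmaMk_of_ne hji] using continuous_const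

end SigmaType

theorem Function.extend_zero_induction {α β γ κ : Type*} [Zero γ] (f : α → β) (G : κ → α → γ)
    {P : (κ → γ) → Prop} (h0 : P 0) (hG : ∀ a, P fun k => G k a) (b : β) :
    P fun k => extend f (G k) 0 b := by
  classical
  by_cases h : ∃ a, f a = b
  · simpa only [extend_def, dif_pos h] using hG _
  · simp only [extend_def, dif_neg h, Pi.zero_apply]
    exact h0

theorem MeasurableEmbedding.integral_comap {α β E : Type*} [MeasurableSpace α] [MeasurableSpace β]
    [NormedAddCommGroup E] [NormedSpace ℝ E] {f : α → β} (hf : MeasurableEmbedding f)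
    (μ : Measure β) (g : α → E) :
    ∫ x, g x ∂(μ.comap f) = ∫ y, extend f g 0 y ∂μ := by
  have hvanish : (range f)ᶜ.EqOn (extend f g 0) 0 := fun y hy =>
    extend_apply' _ _ _ fun ⟨a, ha⟩ => hy ⟨a, ha⟩
  calc ∫ x, g x ∂(μ.comap f) = ∫ x, extend f g 0 (f x) ∂(μ.comap f) := by
        simp only [hf.injective.extend_apply]
    _ = ∫ y in range f, extend f g 0 y ∂μ := by rw [← hf.integral_map, hf.map_comap]
    _ = ∫ y, extend f g 0 y ∂μ := setIntegral_eq_integral_of_forall_compl_eq_zero hvanish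

theorem ContinuousOn.integral_of_lipschitzWith {T X : Type*} [PseudoMetricSpace T]
    [TopologicalSpace X] [MeasurableSpace X] [OpensMeasurableSpace X]
    {ν : T → Measure X} {S : Set T} (hν : ∀ s ∈ S, IsProbabilityMeasure (ν s))
    (hweak : ∀ f : BoundedContinuousFunction X ℝ, ContinuousOn (fun s => ∫ x, f x ∂(ν s)) S)
    {g : T → X → ℝ} {M : ℝ} {L : ℝ≥0} (hgc : ∀ s, Continuous (g s))
    (hgb : ∀ s x, |g s x| ≤ M) (hgL : ∀ x, LipschitzWith L fun s => g s x) :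
    ContinuousOn (fun s => ∫ x, g s x ∂(ν s)) S := by
  intro s₀ hs₀
  have hint : ∀ s ∈ S, ∀ s', Integrable (g s') (ν s) := fun s hs s' =>
    have := hν s hs
    .of_bound (hgc s').aestronglyMeasurable M (.of_forall fun x => hgb s' x)
  have hfixed : Tendsto (fun s => ∫ x, g s₀ x ∂(ν s)) (𝓝[S] s₀) (𝓝 (∫ x, g s₀ x ∂(ν s₀))) :=
    hweak (.ofNormedAddCommGroup (g s₀) (hgc s₀) M (hgb s₀)) s₀ hs₀
  have hmoving : Tendsto (fun s => ∫ x, g s x ∂(ν s) - ∫ x, g s₀ x ∂(ν s)) (𝓝[S] s₀) (𝓝 0) := by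
    refine squeeze_zero_norm' (a := fun s => L * dist s s₀) ?_ ?_
    · filter_upwards [self_mem_nhdsWithin] with s hs
      have := hν s hs
      rw [← integral_sub (hint s hs s) (hint s hs s₀)]
      have hpt : ∀ x, ‖g s x - g s₀ x‖ ≤ L * dist s s₀ := fun x =>
        (dist_eq_norm _ _).symm.trans_le ((hgL x).dist_le_mul s s₀)
      simpa using norm_integral_le_of_norm_le_const (μ := ν s) (.of_forall hpt)
    · have hcont : Continuous fun s => (L : ℝ) * dist s s₀ := by fun_prop
      simpa using (hcont.tendsto s₀).mono_left nhdsWithin_le_nhds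
  simpa [ContinuousWithinAt] using hmoving.add hfixed

section JumpIntegral

variable {Y Z : Type*} [MeasurableSpace Y]

noncomputable def jumpIntegral (μ : Measure Y) (w : Y → ℝ) (p q : Y → Z) (φ : Z → ℝ) : ℝ :=
  ∫ y, w y * (φ (p y) - φ (q y)) ∂μ

theorem abs_mul_sub_le {w a b : ℝ} {M : ℝ≥0} (hw : ‖w‖₊ ≤ M) (ha : |a| ≤ 1) (hb : |b| ≤ 1) :
    |w * (a - b)| ≤ M * 2 := by
  have hw' : |w| ≤ M := by exact_mod_cast hw
  rw [abs_mul]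
  exact mul_le_mul hw' ((abs_sub a b).trans (by linarith)) (abs_nonneg _) M.2

theorem abs_jumpIntegral_le {μ : Measure Y} [IsFiniteMeasure μ] (hμ : μ univ ≤ 1) {w : Y → ℝ}
    {M : ℝ≥0} (hw : ∀ y, ‖w y‖₊ ≤ M) (p q : Y → Z) {φ : Z → ℝ} (hφ : ∀ z, |φ z| ≤ 1) :
    |jumpIntegral μ w p q φ| ≤ M * 2 := by
  have hmass : μ.real univ ≤ 1 := ENNReal.toReal_le_of_le_ofReal zero_le_one (by simpa using hμ)
  calc |jumpIntegral μ w p q φ| ≤ M * 2 * μ.real univ :=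
        norm_integral_le_of_norm_le_const (f := fun y => w y * (φ (p y) - φ (q y)))
          (.of_forall fun y => abs_mul_sub_le (hw y) (hφ _) (hφ _))
    _ ≤ M * 2 := mul_le_of_le_one_right (by positivity) hmass

theorem tendsto_jumpIntegral [TopologicalSpace Y] [OpensMeasurableSpace Y] [TopologicalSpace Z]
    (μ : Measure Y) [IsFiniteMeasure μ] {w : Y → ℝ} (hwc : Continuous w) {M : ℝ≥0}
    (hw : ∀ y, ‖w y‖₊ ≤ M) {p q : Y → Z} (hp : Continuous p) (hq : Continuous q)
    {f : ℕ → Z → ℝ} {φ : Z → ℝ} (hfc : ∀ k, Continuous (f k)) (hf : ∀ k z, |f k z| ≤ 1)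
    (hlim : ∀ z, Tendsto (f · z) atTop (𝓝 (φ z))) :
    Tendsto (fun k => jumpIntegral μ w p q (f k)) atTop (𝓝 (jumpIntegral μ w p q φ)) :=
  tendsto_integral_of_dominated_convergence (fun _ => M * 2)
    (fun k => (hwc.mul (((hfc k).comp hp).sub ((hfc k).comp hq))).aestronglyMeasurable)
    (integrable_const _) (fun k => .of_forall fun y => abs_mul_sub_le (hw y) (hf k _) (hf k _))
    (.of_forall fun _ => ((hlim _).sub (hlim _)).const_mul _)

end JumpIntegral

theorem abs_sum_le_sum_of_abs_le {ι : Type*} (s : Finset ι) {f g : ι → ℝ}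
    (h : ∀ i ∈ s, |f i| ≤ g i) : |∑ i ∈ s, f i| ≤ ∑ i ∈ s, g i :=
  (Finset.abs_sum_le_sum_abs f s).trans (Finset.sum_le_sum h)

namespace MFModel

theorem level_eq_range (n : ℕ) : level n = range (Sigma.mk n) := by
  ext ⟨m, x⟩
  constructor
  · rintro rfl
    exact ⟨x, rfl⟩
  · rintro ⟨_, hx⟩
    exact (congrArg Sigma.fst hx).symm

theorem isClopen_level (n : ℕ) : IsClopen (level n) :=
  level_eq_range n ▸ isClopen_range_sigmaMk

theorem abs_indicator_level_le (n : ℕ) (u : SState) :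
    |(level n).indicator (fun _ => (1 : ℝ)) u| ≤ 1 :=
  (norm_indicator_le_norm_self (fun _ => (1 : ℝ)) u).trans norm_one.le

theorem isCb_indicator_level (n : ℕ) : IsCb ((level n).indicator fun _ => (1 : ℝ)) :=
  ⟨(isClopen_level n).continuous_indicator continuous_const, 1, abs_indicator_level_le n⟩

theorem continuous_shift (a : ℝ) : Continuous (shift a) :=
  continuous_sigma fun _ =>
    continuous_sigmaMk.comp (continuous_pi fun i => (continuous_apply i).add continuous_const)

theorem continuous_shift_left (u : SState) : Continuous fun a => shift a u :=
  continuous_sigmaMk.comp (by fun_prop)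

theorem integral_fiber (ν : Measure SState) (n : ℕ) (F : (Fin n → ℝ≥0) → ℝ) :
    ∫ x, F x ∂(fiber ν n) = ∫ u, extend (Sigma.mk n) F 0 u ∂ν :=
  (measurableEmbedding_sigmaMk n).integral_comap ν F

instance (ν : Measure SState) [IsFiniteMeasure ν] (n : ℕ) : IsFiniteMeasure (fiber ν n) :=
  inferInstanceAs (IsFiniteMeasure (ν.comap _))

theorem fiber_univ_le_one (ν : Measure SState) [IsProbabilityMeasure ν] (n : ℕ) :
    fiber ν n univ ≤ 1 :=
  (Measure.comap_apply_le _ _ nullMeasurableSet_univ).trans prob_le_one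

theorem Rbar_nonneg (C : ℕ) (ν : Measure SState) (n : ℕ) : 0 ≤ Rbar C ν n :=
  Finset.sum_nonneg fun _ _ => ENNReal.toReal_nonneg

theorem Rbar_le (C : ℕ) (ν : Measure SState) [IsProbabilityMeasure ν] (n : ℕ) :
    Rbar C ν n ≤ C + 1 :=
  calc Rbar C ν n ≤ ∑ _m ∈ Finset.Icc n C, (1 : ℝ) :=
        Finset.sum_le_sum fun _ _ => measureReal_le_one
    _ = ((C + 1 - n : ℕ) : ℝ) := by simp
    _ ≤ C + 1 := by exact_mod_cast Nat.sub_le _ _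

theorem abs_Phi_le (C d : ℕ) (ν : Measure SState) [IsProbabilityMeasure ν] (n : ℕ) :
    |Phi C d ν n| ≤ ∑ k ∈ Finset.range d, ((C : ℝ) + 1) ^ k * ((C : ℝ) + 1) ^ (d - 1 - k) := by
  have h0 := Rbar_nonneg C ν
  have h1 := Rbar_le C ν
  refine abs_sum_le_sum_of_abs_le _ fun k _ => ?_
  rw [abs_mul, abs_pow, abs_pow, abs_of_nonneg (h0 _), abs_of_nonneg (h0 _)]
  exact mul_le_mul (pow_le_pow_left₀ (h0 _) (h1 _) _) (pow_le_pow_left₀ (h0 _) (h1 _) _)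
    (pow_nonneg (h0 _) _) (by positivity)

theorem drift_eq_jumpIntegral (C d : ℕ) (lam : ℝ) (β : ℝ≥0 → ℝ) (φ : SState → ℝ)
    (ν : Measure SState) :
    drift C d lam β φ ν =
      (∑ n ∈ Finset.range C, ∑ j : Fin (n + 1), jumpIntegral (fiber ν (n + 1))
        (fun x => β (x j)) (fun x => ⟨n, x ∘ j.succAbove⟩) (fun x => ⟨n + 1, x⟩) φ)
      + lam * ((ν (level 0)).toReal * Phi C d ν 0 * (φ oneZero - φ emptyState)
        + ∑ n ∈ Finset.Icc 1 (C - 1), Phi C d ν n / (n + 1) * ∑ j : Fin (n + 1),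
          jumpIntegral (fiber ν n) 1 (fun x => ⟨n + 1, j.insertNth 0 x⟩) (fun x => ⟨n, x⟩) φ) := by
  simp [drift, jumpIntegral]

theorem exists_abs_drift_le (C d : ℕ) (lam : ℝ) {β : ℝ≥0 → ℝ} {Mβ : ℝ≥0}
    (hβ : ∀ x, ‖β x‖₊ ≤ Mβ) :
    ∃ B, ∀ (ν : Measure SState) [IsProbabilityMeasure ν] (φ : SState → ℝ),
      (∀ u, |φ u| ≤ 1) → |drift C d lam β φ ν| ≤ B := by
  set K := ∑ k ∈ Finset.range d, ((C : ℝ) + 1) ^ k * ((C : ℝ) + 1) ^ (d - 1 - k)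
  refine ⟨(∑ n ∈ Finset.range C, ∑ _j : Fin (n + 1), (Mβ : ℝ) * 2)
    + |lam| * (K * 2 + ∑ n ∈ Finset.Icc 1 (C - 1), K * ∑ _j : Fin (n + 1), 1 * 2),
    fun ν _ φ hφ => ?_⟩
  have hφ2 : |φ oneZero - φ emptyState| ≤ 2 :=
    (abs_sub _ _).trans (by linarith [hφ oneZero, hφ emptyState])
  have hdeparture : ∀ n (j : Fin (n + 1)), |jumpIntegral (fiber ν (n + 1)) (fun x => β (x j))
      (fun x => ⟨n, x ∘ j.succAbove⟩) (fun x => ⟨n + 1, x⟩) φ| ≤ Mβ * 2 := fun n _ =>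
    abs_jumpIntegral_le (fiber_univ_le_one ν _) (fun _ => hβ _) _ _ hφ
  have harrival : ∀ n (j : Fin (n + 1)), |jumpIntegral (fiber ν n) 1
      (fun x => ⟨n + 1, j.insertNth 0 x⟩) (fun x => ⟨n, x⟩) φ| ≤ 1 * 2 := fun n _ =>
    mod_cast abs_jumpIntegral_le (M := 1) (fiber_univ_le_one ν _) (fun _ => by simp) _ _ hφ
  have hlevel : |(ν (level 0)).toReal * Phi C d ν 0| ≤ K :=
    calc |(ν (level 0)).toReal * Phi C d ν 0| ≤ 1 * K := by
          rw [abs_mul, abs_of_nonneg ENNReal.toReal_nonneg]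
          exact mul_le_mul measureReal_le_one (abs_Phi_le C d ν 0) (abs_nonneg _) zero_le_one
      _ = K := one_mul K
  have hrate : ∀ n : ℕ, |Phi C d ν n / (n + 1)| ≤ K := fun n => by
    rw [abs_div]
    exact (div_le_self (abs_nonneg _) (by rw [abs_of_pos (by positivity)]; simp)).trans
      (abs_Phi_le C d ν n)
  rw [drift_eq_jumpIntegral]
  refine (abs_add_le _ _).trans (add_le_add ?_ ?_)
  · exact abs_sum_le_sum_of_abs_le _ fun n _ => abs_sum_le_sum_of_abs_le _ fun j _ => hdeparture n j
  rw [abs_mul]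
  refine mul_le_mul_of_nonneg_left ((abs_add_le _ _).trans (add_le_add ?_ ?_)) (abs_nonneg _)
  · rw [abs_mul]
    exact mul_le_mul hlevel hφ2 (abs_nonneg _) ((abs_nonneg _).trans hlevel)
  · refine abs_sum_le_sum_of_abs_le _ fun n _ => ?_
    rw [abs_mul]
    exact mul_le_mul (hrate n) (abs_sum_le_sum_of_abs_le _ fun j _ => harrival n j) (abs_nonneg _)
      ((abs_nonneg _).trans (hrate n))

theorem continuous_mk (n : ℕ) : Continuous fun x : Fin n → ℝ≥0 => (⟨n, x⟩ : SState) :=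
  continuous_sigmaMk (σ := fun n : ℕ => Fin n → ℝ≥0)

theorem continuous_removeAge (n : ℕ) (j : Fin (n + 1)) :
    Continuous fun x : Fin (n + 1) → ℝ≥0 => (⟨n, x ∘ j.succAbove⟩ : SState) :=
  continuous_sigmaMk.comp (by fun_prop)

theorem continuous_insertZeroAge (n : ℕ) (j : Fin (n + 1)) :
    Continuous fun x : Fin n → ℝ≥0 => (⟨n + 1, j.insertNth 0 x⟩ : SState) :=
  continuous_sigmaMk.comp (continuous_const.finInsertNth j continuous_id)

theorem tendsto_drift (C d : ℕ) (lam : ℝ) {β : ℝ≥0 → ℝ} (hβc : Continuous β) {Mβ : ℝ≥0}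
    (hβ : ∀ x, ‖β x‖₊ ≤ Mβ) (ν : Measure SState) [IsProbabilityMeasure ν]
    {f : ℕ → SState → ℝ} {φ : SState → ℝ} (hfc : ∀ k, Continuous (f k))
    (hf : ∀ k u, |f k u| ≤ 1) (hlim : ∀ u, Tendsto (f · u) atTop (𝓝 (φ u))) :
    Tendsto (fun k => drift C d lam β (f k) ν) atTop (𝓝 (drift C d lam β φ ν)) := by
  simp only [drift_eq_jumpIntegral]
  have hdeparture := fun n (j : Fin (n + 1)) => tendsto_jumpIntegral (fiber ν (n + 1))
    (hβc.comp (continuous_apply j)) (fun x => hβ (x j)) (continuous_removeAge n j)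
    (continuous_mk _) hfc hf hlim
  have harrival := fun n (j : Fin (n + 1)) => tendsto_jumpIntegral (fiber ν n) (w := 1) (M := 1)
    continuous_const (fun _ => by simp) (continuous_insertZeroAge n j) (continuous_mk _)
    hfc hf hlim
  exact (tendsto_finsetSum _ fun n _ => tendsto_finsetSum _ fun j _ => hdeparture n j).add
    ((((((hlim _).sub (hlim _)).const_mul _).add (tendsto_finsetSum _ fun n _ =>
      (tendsto_finsetSum _ fun j _ => harrival n j).const_mul _))).const_mul lam)

section Path

variable {ν : ℝ → Measure SState}

theorem continuousOn_jumpIntegral_fiber (hν : ∀ s ≥ 0, IsProbabilityMeasure (ν s))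
    (hweak : WeaklyContinuous ν) {m : ℕ} {w : (Fin m → ℝ≥0) → ℝ} (hwc : Continuous w)
    {M : ℝ≥0} (hw : ∀ x, ‖w x‖₊ ≤ M) {p q : (Fin m → ℝ≥0) → SState} (hp : Continuous p)
    (hq : Continuous q) {ψ : ℝ → SState → ℝ} (hψc : ∀ s, Continuous (ψ s))
    (hψ : ∀ s u, |ψ s u| ≤ 1) {L : ℝ≥0} (hψL : ∀ u, LipschitzWith L (ψ · u)) :
    ContinuousOn (fun s => jumpIntegral (fiber (ν s) m) w p q (ψ s)) (Ici 0) := by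
  simp only [jumpIntegral, integral_fiber]
  refine ContinuousOn.integral_of_lipschitzWith hν hweak (M := M * 2) (L := M * (L + L))
    (fun s => (hwc.mul (((hψc s).comp hp).sub ((hψc s).comp hq))).extend_sigmaMk)
    (fun s u => ?_) (fun u => ?_)
  · refine extend_zero_induction (P := fun v => ∀ s, |v s| ≤ (M : ℝ) * 2) _ _ (fun _ => ?_)
      (fun x s => abs_mul_sub_le (hw x) (hψ _ _) (hψ _ _)) u s
    simp
  · refine extend_zero_induction (P := LipschitzWith _) _ _ (LipschitzWith.const' 0)
      (fun x => ?_) u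
    exact ((lipschitzWith_smul (w x)).comp ((hψL _).sub (hψL _))).weaken
      (mul_le_mul_left (hw x) _)

theorem continuousOn_measureReal_level (hweak : WeaklyContinuous ν) (n : ℕ) :
    ContinuousOn (fun s => (ν s (level n)).toReal) (Ici 0) :=
  (hweak (.ofNormedAddCommGroup _ (isCb_indicator_level n).1 1 (abs_indicator_level_le n))).congr
    fun _ _ => (integral_indicator_one (isClopen_level n).isOpen.measurableSet).symm

theorem continuousOn_Phi (hweak : WeaklyContinuous ν) (C d n : ℕ) :
    ContinuousOn (fun s => Phi C d (ν s) n) (Ici 0) := by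
  have hRbar : ∀ m, ContinuousOn (fun s => Rbar C (ν s) m) (Ici 0) := fun m =>
    continuousOn_finsetSum _ fun i _ => continuousOn_measureReal_level hweak i
  exact continuousOn_finsetSum _ fun k _ => ((hRbar n).pow k).mul ((hRbar (n + 1)).pow _)

theorem continuousOn_drift_shift (hν : ∀ s ≥ 0, IsProbabilityMeasure (ν s))
    (hweak : WeaklyContinuous ν) (C d : ℕ) (lam : ℝ) {β : ℝ≥0 → ℝ} (hβc : Continuous β)
    {Mβ : ℝ≥0} (hβ : ∀ x, ‖β x‖₊ ≤ Mβ) {φ : SState → ℝ} (hφc : Continuous φ)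
    (hφ : ∀ u, |φ u| ≤ 1) {L : ℝ≥0} (hφL : ∀ u, LipschitzWith L fun a => φ (shift a u))
    (t : ℝ) :
    ContinuousOn (fun s => drift C d lam β (fun u => φ (shift (t - s) u)) (ν s)) (Ici 0) := by
  have hψc : ∀ s, Continuous fun u => φ (shift (t - s) u) := fun s =>
    hφc.comp (continuous_shift _)
  have hψL : ∀ u, LipschitzWith L fun s => φ (shift (t - s) u) := fun u => by
    have := (hφL u).comp ((LipschitzWith.const t).sub LipschitzWith.id)
    rwa [zero_add, mul_one] at this
  have hempty : Continuous fun s => φ (shift (t - s) oneZero) - φ (shift (t - s) emptyState) :=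
    ((hφc.comp (continuous_shift_left _)).sub (hφc.comp (continuous_shift_left _))).comp
      (continuous_const.sub continuous_id)
  have hdeparture := fun n (j : Fin (n + 1)) => continuousOn_jumpIntegral_fiber hν hweak
    (hβc.comp (continuous_apply j)) (fun x => hβ (x j)) (continuous_removeAge n j)
    (continuous_mk _) hψc (fun _ _ => hφ _) hψL
  have harrival := fun n (j : Fin (n + 1)) => continuousOn_jumpIntegral_fiber hν hweak
    (w := 1) (M := 1) continuous_const (fun _ => by simp) (continuous_insertZeroAge n j)
    (continuous_mk _) hψc (fun _ _ => hφ _) hψL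
  simp only [drift_eq_jumpIntegral]
  exact (continuousOn_finsetSum _ fun n _ => continuousOn_finsetSum _ fun j _ => hdeparture n j).add
    (continuousOn_const.mul ((((continuousOn_measureReal_level hweak 0).mul
      (continuousOn_Phi hweak C d 0)).mul hempty.continuousOn).add
        (continuousOn_finsetSum _ fun n _ => ((continuousOn_Phi hweak C d n).div_const _).mul
          (continuousOn_finsetSum _ fun j _ => harrival n j))))

end Path

theorem tendsto_pair (μ : Measure SState) [IsFiniteMeasure μ] {f : ℕ → SState → ℝ}
    {φ : SState → ℝ} (hfc : ∀ k, Continuous (f k)) (hf : ∀ k u, |f k u| ≤ 1)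
    (hlim : ∀ u, Tendsto (f · u) atTop (𝓝 (φ u))) :
    Tendsto (fun k => pair μ (f k)) atTop (𝓝 (pair μ φ)) :=
  tendsto_integral_of_dominated_convergence (fun _ => 1) (fun k => (hfc k).aestronglyMeasurable)
    (integrable_const 1) (fun k => .of_forall (hf k)) (.of_forall hlim)

theorem mildEq_of_tendsto {C d : ℕ} {lam : ℝ} {β : ℝ≥0 → ℝ} {ν : ℝ → Measure SState}
    (hsol : IsMildSolution C d lam β ν) (hβc : Continuous β) {Mβ : ℝ≥0}
    (hβ : ∀ x, ‖β x‖₊ ≤ Mβ) {f : ℕ → SState → ℝ} {φ : SState → ℝ}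
    (hfc : ∀ k, Continuous (f k)) (hf : ∀ k u, |f k u| ≤ 1)
    (hfL : ∀ k, ∃ L, ∀ u, LipschitzWith L fun a => f k (shift a u))
    (hlim : ∀ u, Tendsto (f · u) atTop (𝓝 (φ u))) :
    MildEq C d lam β ν φ := by
  obtain ⟨hmem, hweak, hmild⟩ := hsol
  have hν : ∀ s ≥ 0, IsProbabilityMeasure (ν s) := fun s hs => (hmem s hs).1
  obtain ⟨B, hB⟩ := exists_abs_drift_le C d lam hβ
  intro t ht
  have := hν t ht
  have := hν 0 le_rfl
  have hnonneg : ∀ s ∈ uIoc 0 t, 0 ≤ s := fun s hs => (uIoc_of_le ht ▸ hs).1.le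
  have hdrift : Tendsto
      (fun k => ∫ s in (0 : ℝ)..t, drift C d lam β (fun u => f k (shift (t - s) u)) (ν s)) atTop
      (𝓝 (∫ s in (0 : ℝ)..t, drift C d lam β (fun u => φ (shift (t - s) u)) (ν s))) := by
    refine intervalIntegral.tendsto_integral_filter_of_dominated_convergence (fun _ => B)
      (.of_forall fun k => ?_) (.of_forall fun k => .of_forall fun s hs => ?_)
      intervalIntegrable_const (.of_forall fun s hs => ?_)
    · obtain ⟨L, hL⟩ := hfL k
      exact ((continuousOn_drift_shift hν hweak C d lam hβc hβ (hfc k) (hf k) hL t).mono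
        hnonneg).aestronglyMeasurable measurableSet_uIoc
    · have := hν s (hnonneg s hs)
      exact hB (ν s) _ fun u => hf k _
    · have := hν s (hnonneg s hs)
      exact tendsto_drift C d lam hβc hβ (ν s) (fun k => (hfc k).comp (continuous_shift _))
        (fun k u => hf k _) fun u => hlim _
  refine tendsto_nhds_unique (tendsto_pair (ν t) hfc hf hlim) ?_
  refine ((tendsto_pair (ν 0) (fun k => (hfc k).comp (continuous_shift t)) (fun k u => hf k _)
    fun u => hlim _).add hdrift).congr fun k => ?_
  exact (hmild (f k) ⟨hfc k, 1, hf k⟩ t ht).symm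

noncomputable def boxApprox (n : ℕ) (y : Fin n → ℝ≥0) (k : ℕ) : SState → ℝ :=
  extend (Sigma.mk n)
    (fun x => (thickenedIndicator (Nat.one_div_pos_of_nat (n := k)) (Iic y) x : ℝ)) 0

section BoxApprox

variable (n : ℕ) (y : Fin n → ℝ≥0)

theorem boxApprox_mk_self (k : ℕ) (x : Fin n → ℝ≥0) :
    boxApprox n y k ⟨n, x⟩ = thickenedIndicator (Nat.one_div_pos_of_nat (n := k)) (Iic y) x :=
  sigma_mk_injective.extend_apply _ _ _

theorem boxApprox_mk_of_ne {m : ℕ} (h : m ≠ n) (k : ℕ) (x : Fin m → ℝ≥0) :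
    boxApprox n y k ⟨m, x⟩ = 0 :=
  extend_sigmaMk_of_ne h _ _

theorem continuous_boxApprox (k : ℕ) : Continuous (boxApprox n y k) :=
  (NNReal.continuous_coe.comp (thickenedIndicator _ _).continuous).extend_sigmaMk

theorem abs_boxApprox_le (k : ℕ) (u : SState) : |boxApprox n y k u| ≤ 1 := by
  rcases u with ⟨m, x⟩
  rcases eq_or_ne m n with rfl | h
  · rw [boxApprox_mk_self, abs_of_nonneg (by positivity)]
    exact_mod_cast thickenedIndicator_le_one _ _ x
  · simp [boxApprox_mk_of_ne n y h]

theorem lipschitzWith_boxApprox_shift (k : ℕ) (u : SState) :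
    LipschitzWith (1 / ((k : ℝ) + 1)).toNNReal⁻¹ fun a => boxApprox n y k (shift a u) := by
  rcases u with ⟨m, x⟩
  rcases eq_or_ne m n with rfl | h
  · have hage : LipschitzWith 1 fun a : ℝ => fun i => x i + a.toNNReal :=
      .of_dist_le_mul fun a b => (dist_pi_le_iff (by positivity)).2 fun i => by
        simpa [NNReal.dist_eq] using Real.lipschitzWith_toNNReal.dist_le_mul a b
    refine .of_dist_le_mul fun a b => ?_
    simp only [shift, boxApprox_mk_self]
    rw [Real.dist_eq, ← NNReal.dist_eq]
    have := ((lipschitzWith_thickenedIndicator (Nat.one_div_pos_of_nat (n := k)) (Iic y)).comp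
      hage).dist_le_mul a b
    rwa [mul_one] at this
  · simpa only [shift, boxApprox_mk_of_ne n y h] using LipschitzWith.const' 0

theorem tendsto_boxApprox (u : SState) :
    Tendsto (boxApprox n y · u) atTop
      (𝓝 (((fun x : Fin n → ℝ≥0 => (⟨n, x⟩ : SState)) '' {x | ∀ i, x i ≤ y i}).indicator
        (fun _ => (1 : ℝ)) u)) := by
  rcases u with ⟨m, x⟩
  rcases eq_or_ne m n with rfl | h
  · have himage : ((fun x : Fin m → ℝ≥0 => (⟨m, x⟩ : SState)) '' {x | ∀ i, x i ≤ y i}).indicator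
        (fun _ => (1 : ℝ)) ⟨m, x⟩ = (Iic y).indicator (fun _ => 1) x :=
      Set.indicator_image sigma_mk_injective
    simp only [boxApprox_mk_self, himage]
    have := tendsto_pi_nhds.1 (thickenedIndicator_tendsto_indicator_closure
      (fun k => Nat.one_div_pos_of_nat) tendsto_one_div_add_atTop_nhds_zero_nat (Iic y)) x
    rw [isClosed_Iic.closure_eq] at this
    simpa [NNReal.coe_indicator] using NNReal.tendsto_coe.2 this
  · have hout : (⟨m, x⟩ : SState) ∉
        (fun x : Fin n → ℝ≥0 => (⟨n, x⟩ : SState)) '' {x | ∀ i, x i ≤ y i} :=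
      fun ⟨_, _, hx⟩ => h (congrArg Sigma.fst hx).symm
    simp [boxApprox_mk_of_ne n y h, hout]

end BoxApprox

theorem mild_equation_for_rectangle_indicators_general
    (C d : ℕ) (lam : ℝ)
    (β : ℝ≥0 → ℝ) (hβc : Continuous β) (hβnn : ∀ x, 0 ≤ β x) (hβb : ∃ M, ∀ x, β x ≤ M)
    (ν : ℝ → Measure SState) (hsol : IsMildSolution C d lam β ν) :
    (∀ n, 1 ≤ n → n ≤ C → ∀ y : Fin n → ℝ≥0,
      MildEq C d lam β ν
        (Set.indicator
          ((fun x : Fin n → ℝ≥0 => (⟨n, x⟩ : SState)) '' {x | ∀ i, x i ≤ y i})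
          (fun _ => (1 : ℝ)))) ∧
    MildEq C d lam β ν (Set.indicator (level 0) fun _ => (1 : ℝ)) := by
  obtain ⟨M, hM⟩ := hβb
  have hβ : ∀ x, ‖β x‖₊ ≤ M.toNNReal := fun x => by
    rw [Real.nnnorm_of_nonneg (hβnn x), ← Real.toNNReal_of_nonneg (hβnn x)]
    exact Real.toNNReal_le_toNNReal (hM x)
  refine ⟨fun n _ _ y => mildEq_of_tendsto hsol hβc hβ (continuous_boxApprox n y)
    (abs_boxApprox_le n y) (fun k => ⟨_, lipschitzWith_boxApprox_shift n y k⟩)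
    (tendsto_boxApprox n y), hsol.2.2 _ (isCb_indicator_level 0)⟩

/-- **The mild-form equation extends to indicators of closed rectangles.**
If `(ν_t)_{t≥0}` is a weakly continuous mild solution of the mean-field equation (for all
bounded continuous test functions) such that for every `s ≥ 0` and `1 ≤ n ≤ C` the
restriction of `ν_s` to `𝒰_n` is absolutely continuous with respect to Lebesgue measure,
then the mild-form equation also holds when the test function is the indicator of a
closed rectangle `{(n,l₁,…,l_n) : 0 ≤ l_i ≤ y_i ∀ i}`, for any `1 ≤ n ≤ C` and any
`y ∈ [0,∞)^n`, as well as when it is the indicator of `𝒰_0 = {0}`. -/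
theorem mild_equation_for_rectangle_indicators
    (C d : ℕ) (hC : 1 ≤ C) (hd : 1 ≤ d) (lam : ℝ) (hlam : 0 < lam)
    (β : ℝ≥0 → ℝ) (hβc : Continuous β) (hβnn : ∀ x, 0 ≤ β x) (hβb : ∃ M, ∀ x, β x ≤ M)
    (ν : ℝ → Measure SState) (hsol : IsMildSolution C d lam β ν)
    (hac : ∀ s ≥ (0 : ℝ), ∀ n, 1 ≤ n → n ≤ C →
      fiberReal (ν s) n ≪ (volume : Measure (Fin n → ℝ))) :
    (∀ n, 1 ≤ n → n ≤ C → ∀ y : Fin n → ℝ≥0,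
      MildEq C d lam β ν
        (Set.indicator
          ((fun x : Fin n → ℝ≥0 => (⟨n, x⟩ : SState)) '' {x | ∀ i, x i ≤ y i})
          (fun _ => (1 : ℝ)))) ∧
    MildEq C d lam β ν (Set.indicator (level 0) fun _ => (1 : ℝ)) :=
  mild_equation_for_rectangle_indicators_general C d lam β hβc hβnn hβb ν hsol

end MFModel
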